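/- Let Z be a coalescent-walk process on [n] and σ = CP(Z). Let I = {i_1 < … < i_k} ⊆ [n] and let π be a permutation of [k]. Then pat_I(σ) = π if and only if for all 1 ≤ ℓ < s ≤ k one has: Z^{(i_ℓ)}_{i_s} ≥ 0 if and only if π(s) < π(ℓ). -/
import Mathlib


/-- `Z` is a coalescent-walk process on `{1,…,n}`: each trajectory starts at `0` at its starting
time, and trajectories, once weakly ordered at some time, stay in that order later. -/
def isCoalescentOn (n : ℕ) (Z : ℕ → ℕ → ℤ) : Prop :=
  (∀ t ∈ Set.Icc 1 n, Z t t = 0) ∧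
  ∀ t ∈ Set.Icc 1 n, ∀ t' ∈ Set.Icc 1 n, t ≤ t' → ∀ k ∈ Set.Icc 1 n, t' ≤ k →
    ((Z t' k ≤ Z t k → ∀ k' ∈ Set.Icc 1 n, k ≤ k' → Z t' k' ≤ Z t k') ∧
     (Z t k ≤ Z t' k → ∀ k' ∈ Set.Icc 1 n, k ≤ k' → Z t k' ≤ Z t' k'))

/-- The relation `≤_Z` associated with a coalescent-walk process `Z`. -/
def leZ (Z : ℕ → ℕ → ℤ) (i j : ℕ) : Prop :=
  i = j ∨ (i < j ∧ Z i j < 0) ∨ (j < i ∧ 0 ≤ Z j i)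

/-- `σ` is a permutation of `{1,…,n}`. -/
def isPermOn (n : ℕ) (σ : ℕ → ℕ) : Prop :=
  Set.BijOn σ (Set.Icc 1 n) (Set.Icc 1 n)

/-- `σ = CP(Z)`: the unique permutation of `{1,…,n}` with `σ(i) ≤ σ(j) ↔ i ≤_Z j`. -/
def isCP (n : ℕ) (Z : ℕ → ℕ → ℤ) (σ : ℕ → ℕ) : Prop :=
  isPermOn n σ ∧
  ∀ i ∈ Set.Icc 1 n, ∀ j ∈ Set.Icc 1 n, (σ i ≤ σ j ↔ leZ Z i j)

/-- Pattern extraction from `σ = CP(Z)` is read off the trajectories of `Z`: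
for `I = {i_1 < … < i_k} ⊆ {1,…,n}` and a permutation `π` of `{1,…,k}`, one has
`pat_I(σ) = π` (i.e. `π(ℓ) < π(s) ↔ σ(i_ℓ) < σ(i_s)` for all `ℓ, s`) if and only if for all
`1 ≤ ℓ < s ≤ k`, `Z^{(i_ℓ)}_{i_s} ≥ 0 ↔ π(s) < π(ℓ)`. -/
theorem pattern_of_coalescent (n k : ℕ) (Z : ℕ → ℕ → ℤ) (hZ : isCoalescentOn n Z)
    (σ : ℕ → ℕ) (hσ : isCP n Z σ)
    (i : ℕ → ℕ) (hmem : ∀ ℓ ∈ Set.Icc 1 k, i ℓ ∈ Set.Icc 1 n)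
    (hmono : ∀ ℓ s, 1 ≤ ℓ → ℓ < s → s ≤ k → i ℓ < i s)
    (π : ℕ → ℕ) (hπ : isPermOn k π) :
    ((∀ ℓ ∈ Set.Icc 1 k, ∀ s ∈ Set.Icc 1 k, (π ℓ < π s ↔ σ (i ℓ) < σ (i s))) ↔
      (∀ ℓ s, 1 ≤ ℓ → ℓ < s → s ≤ k → (0 ≤ Z (i ℓ) (i s) ↔ π s < π ℓ))) := by
  clear hZ
  -- key: for ℓ < s in range, σ (i s) < σ (i ℓ) ↔ 0 ≤ Z (i ℓ) (i s)
  have key : ∀ ℓ s, 1 ≤ ℓ → ℓ < s → s ≤ k →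
      (σ (i s) < σ (i ℓ) ↔ 0 ≤ Z (i ℓ) (i s)) := by
    intro ℓ s h1 hls hsk
    have hℓ : ℓ ∈ Set.Icc 1 k := ⟨h1, le_of_lt (lt_of_lt_of_le hls hsk)⟩
    have hs : s ∈ Set.Icc 1 k := ⟨le_trans h1 (le_of_lt hls), hsk⟩
    have hiℓ := hmem ℓ hℓ
    have his := hmem s hs
    have hlt : i ℓ < i s := hmono ℓ s h1 hls hsk
    have hne : σ (i ℓ) ≠ σ (i s) := fun h =>
      absurd (hσ.1.injOn hiℓ his h) (Nat.ne_of_lt hlt)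
    have hle : σ (i ℓ) ≤ σ (i s) ↔ Z (i ℓ) (i s) < 0 := by
      rw [hσ.2 _ hiℓ _ his]
      unfold leZ
      constructor
      · rintro (h | ⟨_, h⟩ | ⟨h, _⟩)
        · exact absurd h (Nat.ne_of_lt hlt)
        · exact h
        · omega
      · intro h; exact Or.inr (Or.inl ⟨hlt, h⟩)
    constructor
    · intro h
      by_contra hneg
      exact absurd (hle.mpr (by omega)) (by omega)
    · intro h
      have := mt hle.mp (by omega)
      omega
  constructor
  · intro hpat ℓ s h1 hls hsk
    have hℓ : ℓ ∈ Set.Icc 1 k := ⟨h1, le_of_lt (lt_of_lt_of_le hls hsk)⟩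
    have hs : s ∈ Set.Icc 1 k := ⟨le_trans h1 (le_of_lt hls), hsk⟩
    rw [← key ℓ s h1 hls hsk]
    exact (hpat s hs ℓ hℓ).symm
  · intro hZc ℓ hℓ s hs
    have hπne : ℓ ≠ s → π ℓ ≠ π s := fun h hh => absurd (hπ.injOn hℓ hs hh) h
    have hσne : ℓ ≠ s → σ (i ℓ) ≠ σ (i s) := by
      intro h hh
      rcases lt_or_gt_of_ne h with hlt | hgt
      · exact absurd (hσ.1.injOn (hmem ℓ hℓ) (hmem s hs) hh)
          (Nat.ne_of_lt (hmono ℓ s hℓ.1 hlt hs.2))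
      · exact absurd (hσ.1.injOn (hmem ℓ hℓ) (hmem s hs) hh)
          (Nat.ne_of_gt (hmono s ℓ hs.1 hgt hℓ.2))
    rcases lt_trichotomy ℓ s with hlt | rfl | hgt
    · have h1 := hZc ℓ s hℓ.1 hlt hs.2
      have h2 := key ℓ s hℓ.1 hlt hs.2
      have hne1 := hπne (Nat.ne_of_lt hlt)
      have hne2 := hσne (Nat.ne_of_lt hlt)
      omega
    · omega
    · have h1 := hZc s ℓ hs.1 hgt hℓ.2
      have h2 := key s ℓ hs.1 hgt hℓ.2
      have hne1 := hπne (Nat.ne_of_gt hgt)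
      have hne2 := hσne (Nat.ne_of_gt hgt)
      omega
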